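/- In the STS(15) #61 with point set {∞} ∪ Z/7 ∪ Z/7', every automorphism fixes the point ∞, preserves the sets P = Z/7 and P' = Z/7' setwise, and is uniquely determined by its restriction to P. -/

import Mathlib

/-- A permutation is an automorphism of a block set if it maps blocks to blocks. -/
def IsAutomorphism {V : Type*} [DecidableEq V] (B : Finset (Finset V)) (σ : Equiv.Perm V) : Prop :=
  ∀ b : Finset V, b.image σ ∈ B ↔ b ∈ B

/-- The 15-point set `{∞} ∪ Z/7 ∪ (Z/7)'`. -/
inductive P15 where
  | inf : P15
  | pt : ZMod 7 → P15
  | pt' : ZMod 7 → P15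
  deriving DecidableEq, Fintype

/-- The cyclic translation by `i`: fixes `∞`, maps `n ↦ n + i` and `n' ↦ (n + i)'`. -/
def shift15 (i : ZMod 7) : P15 → P15
  | P15.inf => P15.inf
  | P15.pt n => P15.pt (n + i)
  | P15.pt' n => P15.pt' (n + i)

/-- The base blocks `{0,0',∞}, {0,1,3}, {0,1',6'}, {0,2',5'}, {0,3',4'}`. -/
def baseBlocks61 : Finset (Finset P15) :=
  { {P15.pt 0, P15.pt' 0, P15.inf},
    {P15.pt 0, P15.pt 1, P15.pt 3},
    {P15.pt 0, P15.pt' 1, P15.pt' 6},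
    {P15.pt 0, P15.pt' 2, P15.pt' 5},
    {P15.pt 0, P15.pt' 3, P15.pt' 4} }

/-- The 35 blocks of the Steiner triple system STS(15) #61, generated
cyclically mod 7 from the base blocks. -/
def blocks61 : Finset (Finset P15) :=
  Finset.univ.biUnion (fun i : ZMod 7 => baseBlocks61.image (Finset.image (shift15 i)))


/-!
Write `t x y` for the third point of the block through two distinct points. An automorphism
commutes with `t`, hence conjugates the permutation `t x ∘ t y` to `t (σ x) ∘ t (σ y)`. So the
number of partners `y` for which `t x ∘ t y` has order 3 (the cycle graph of `{x, y}` is two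
hexagons) is an invariant of the point `x`. A direct count gives 7 for `∞`, 0 for points of `P`
and 1 for points of `P'`. Finally `n' = t n ∞`, so an automorphism fixing `∞` is determined on
`P'` by its values on `P`.
-/

theorem forall_apply_eq_self_iff_of_semiconj {α β : Type*} {σ : α ≃ β} {f : α → α} {g : β → β}
    (h : Function.Semiconj σ f g) : (∀ b, g b = b) ↔ ∀ a, f a = a := by
  refine ⟨fun hg a => σ.injective ((h a).trans (hg (σ a))), fun hf b => ?_⟩
  obtain ⟨a, rfl⟩ := σ.surjective b
  rw [← h a, hf]

section ThirdPoint

variable {V : Type*} [DecidableEq V]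

structure IsThirdPointFn (B : Finset (Finset V)) (t : V → V → V) : Prop where
  diag : ∀ x, t x x = x
  mem_iff : ∀ {x y z}, x ≠ y → (z ≠ x ∧ z ≠ y ∧ {x, y, z} ∈ B ↔ z = t x y)

theorem IsThirdPointFn.map_apply {B : Finset (Finset V)} {t : V → V → V}
    (ht : IsThirdPointFn B t) {σ : Equiv.Perm V} (hσ : IsAutomorphism B σ) (x y : V) :
    σ (t x y) = t (σ x) (σ y) := by
  by_cases hxy : x = y
  · rw [hxy, ht.diag, ht.diag]
  obtain ⟨hx, hy, hmem⟩ := (ht.mem_iff hxy).2 rfl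
  refine (ht.mem_iff (σ.injective.ne hxy)).1
    ⟨σ.injective.ne hx, σ.injective.ne hy, ?_⟩
  simpa [Finset.image_insert] using (hσ _).2 hmem

variable [Fintype V]

def orderThreePartners (t : V → V → V) (x : V) : Finset V :=
  Finset.univ.filter fun y => y ≠ x ∧ ∀ a, (t x ∘ t y)^[3] a = a

theorem orderThreePartners_apply_eq_map {t : V → V → V} {σ : Equiv.Perm V}
    (hσ : ∀ x y, σ (t x y) = t (σ x) (σ y)) (x : V) :
    orderThreePartners t (σ x) = (orderThreePartners t x).map σ.toEmbedding := by
  ext y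
  obtain ⟨y, rfl⟩ := σ.surjective y
  have hconj : Function.Semiconj σ (t x ∘ t y) (t (σ x) ∘ t (σ y)) := fun a => by
    simp only [Function.comp_apply, hσ]
  simp only [orderThreePartners, Finset.mem_map_equiv, Equiv.symm_apply_apply,
    Finset.mem_filter, Finset.mem_univ, true_and, σ.injective.ne_iff,
    forall_apply_eq_self_iff_of_semiconj (hconj.iterate_right 3)]

theorem card_orderThreePartners_apply {t : V → V → V} {σ : Equiv.Perm V}
    (hσ : ∀ x y, σ (t x y) = t (σ x) (σ y)) (x : V) :
    (orderThreePartners t (σ x)).card = (orderThreePartners t x).card := by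
  rw [orderThreePartners_apply_eq_map hσ, Finset.card_map]

end ThirdPoint

namespace P15

/-- Third point through `n ≠ m` of the block `{i, i+1, i+3}` of the Fano plane on `ZMod 7`. -/
def fanoThird (n m : ZMod 7) : ZMod 7 :=
  if m - n = 1 then n + 3 else if m - n = 2 then n - 1 else if m - n = 3 then n + 1
  else if m - n = 4 then m + 1 else if m - n = 5 then m - 1 else m + 3

/-- The mixed blocks are `{i, (i+k)', (i-k)'}`, so `i` is the midpoint `4 * (a + b)` of `a', b'`
(`4 = 2⁻¹` in `ZMod 7`). -/
def thirdPoint : P15 → P15 → P15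
  | inf, inf => inf
  | inf, pt n => pt' n
  | inf, pt' n => pt n
  | pt n, inf => pt' n
  | pt' n, inf => pt n
  | pt n, pt m => if n = m then pt n else pt (fanoThird n m)
  | pt n, pt' m => if n = m then inf else pt' (2 * n - m)
  | pt' m, pt n => if n = m then inf else pt' (2 * n - m)
  | pt' a, pt' b => if a = b then pt' a else pt (4 * (a + b))

set_option maxRecDepth 10000 in
theorem triple_thirdPoint_mem_blocks61 :
    ∀ x y : P15, x ≠ y → ({x, y, thirdPoint x y} : Finset P15) ∈ blocks61 := by
  decide

theorem thirdPoint_ne : ∀ x y : P15, x ≠ y → thirdPoint x y ≠ x ∧ thirdPoint x y ≠ y := by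
  decide

set_option maxRecDepth 4000 in
theorem thirdPoint_mem_of_mem_blocks61 {b : Finset P15} (hb : b ∈ blocks61) :
    ∀ x ∈ b, ∀ y ∈ b, x ≠ y → thirdPoint x y ∈ b := by
  obtain ⟨i, -, hbi⟩ := Finset.mem_biUnion.mp hb
  obtain ⟨c, hc, rfl⟩ := Finset.mem_image.mp hbi
  simp only [baseBlocks61, Finset.mem_insert, Finset.mem_singleton] at hc
  rcases hc with rfl | rfl | rfl | rfl | rfl <;> (revert i; decide)

theorem isThirdPointFn_thirdPoint : IsThirdPointFn blocks61 thirdPoint where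
  diag := by decide
  mem_iff {x y z} hxy := by
    obtain ⟨htx, hty⟩ := thirdPoint_ne x y hxy
    refine ⟨fun ⟨hzx, hzy, hmem⟩ => ?_, ?_⟩
    · have ht := thirdPoint_mem_of_mem_blocks61 hmem x (by simp) y (by simp) hxy
      simp only [Finset.mem_insert, Finset.mem_singleton] at ht
      tauto
    · rintro rfl
      exact ⟨htx, hty, triple_thirdPoint_mem_blocks61 x y hxy⟩

theorem eq_inf_iff_card_orderThreePartners (x : P15) :
    x = inf ↔ (orderThreePartners thirdPoint x).card = 7 := by
  revert x; decide

theorem exists_eq_pt_iff_card_orderThreePartners (x : P15) :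
    (∃ m, x = pt m) ↔ (orderThreePartners thirdPoint x).card = 0 := by
  revert x; decide

theorem exists_eq_pt'_iff_card_orderThreePartners (x : P15) :
    (∃ m, x = pt' m) ↔ (orderThreePartners thirdPoint x).card = 1 := by
  revert x; decide

theorem thirdPoint_pt_inf (n : ZMod 7) : thirdPoint (pt n) inf = pt' n := rfl

end P15

open P15 in
/-- Every automorphism of the STS(15) #61 fixes `∞`, preserves `P = Z/7` and
`P' = (Z/7)'` setwise, and is determined by its restriction to `P`. -/
theorem sts61_autom_fixes_inf_and_determined :
    ∀ σ : Equiv.Perm P15, IsAutomorphism blocks61 σ →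
      σ P15.inf = P15.inf ∧
      (∀ n : ZMod 7, ∃ m : ZMod 7, σ (P15.pt n) = P15.pt m) ∧
      (∀ n : ZMod 7, ∃ m : ZMod 7, σ (P15.pt' n) = P15.pt' m) ∧
      (∀ τ : Equiv.Perm P15, IsAutomorphism blocks61 τ →
        (∀ n : ZMod 7, σ (P15.pt n) = τ (P15.pt n)) → σ = τ) := by
  have hcard {σ : Equiv.Perm P15} (hσ : IsAutomorphism blocks61 σ) (x : P15) :
      (orderThreePartners thirdPoint (σ x)).card = (orderThreePartners thirdPoint x).card :=
    card_orderThreePartners_apply (isThirdPointFn_thirdPoint.map_apply hσ) x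
  have fix_inf {σ : Equiv.Perm P15} (hσ : IsAutomorphism blocks61 σ) : σ inf = inf := by
    rw [eq_inf_iff_card_orderThreePartners, hcard hσ, ← eq_inf_iff_card_orderThreePartners]
  intro σ hσ
  refine ⟨fix_inf hσ, fun n => ?_, fun n => ?_, fun τ hτ hστ => ?_⟩
  · rw [exists_eq_pt_iff_card_orderThreePartners, hcard hσ,
      ← exists_eq_pt_iff_card_orderThreePartners]
    exact ⟨n, rfl⟩
  · rw [exists_eq_pt'_iff_card_orderThreePartners, hcard hσ,
      ← exists_eq_pt'_iff_card_orderThreePartners]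
    exact ⟨n, rfl⟩
  · ext (_ | n | n)
    · rw [fix_inf hσ, fix_inf hτ]
    · exact hστ n
    · rw [← thirdPoint_pt_inf, isThirdPointFn_thirdPoint.map_apply hσ,
        isThirdPointFn_thirdPoint.map_apply hτ, hστ, fix_inf hσ, fix_inf hτ]
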